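/- arXiv:0808.3884 — 2 statements merged into one kernel-verified Lean document; each statement's English description precedes it below -/
import Mathlib

section
/- If W is consistent, then every stable extension of the default theory ⟨W,D⟩ is a consistent set of formulae. -/
inductive Form : Type where
  | var : ℕ → Form
  | app : (n : ℕ) → ((Fin n → Bool) → Bool) → (Fin n → Form) → Form

namespace Form

def eval (σ : ℕ → Bool) : Form → Bool
  | var x => σ x
  | app _ f a => f (fun i => (a i).eval σ)

def tru : Form := app 0 (fun _ => true) (fun i => i.elim0)
def fls : Form := app 0 (fun _ => false) (fun i => i.elim0)
def neg (φ : Form) : Form := app 1 (fun v => !(v 0)) (fun _ => φ)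
def conj (φ ψ : Form) : Form := app 2 (fun v => v 0 && v 1) ![φ, ψ]
def disj (φ ψ : Form) : Form := app 2 (fun v => v 0 || v 1) ![φ, ψ]

end Form

/-- σ satisfies all formulae of A. -/
def Sat (σ : ℕ → Bool) (A : Set Form) : Prop := ∀ φ ∈ A, φ.eval σ = true

/-- Semantic consequence A ⊨ φ. -/
def Entails (A : Set Form) (φ : Form) : Prop := ∀ σ, Sat σ A → φ.eval σ = true

/-- Th(A) = {φ | A ⊨ φ}. -/
def Th (A : Set Form) : Set Form := {φ | Entails A φ}

def Consistent (A : Set Form) : Prop := ∃ σ, Sat σ A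

/-- A default rule (α : β / γ). -/
structure Default where
  pre : Form
  just : Form
  con : Form

/-- S contains W, is deductively closed, and closed under defaults applicable w.r.t. E. -/
def GammaClosed (W : Set Form) (D : Set Default) (E S : Set Form) : Prop :=
  W ⊆ S ∧ Th S = S ∧ ∀ d ∈ D, d.pre ∈ S → Form.neg d.just ∉ E → d.con ∈ S

/-- Γ(E): the smallest set satisfying the three closure conditions. -/
def Gamma (W : Set Form) (D : Set Default) (E : Set Form) : Set Form :=
  ⋂₀ {S | GammaClosed W D E S}

/-- E is a stable extension of ⟨W,D⟩. -/
def Stable (W : Set Form) (D : Set Default) (E : Set Form) : Prop :=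
  Gamma W D E = E

/-! An inconsistent stable extension is deductively closed, hence the set of all formulae. Relative
to that set no default is applicable (every negated justification belongs to it), so `Th W` is
Γ-closed and Γ(univ) ⊆ Th W; thus univ is stable only if `W` is inconsistent. -/

open Set

section Semantics

variable {A B : Set Form}

theorem subset_th (A : Set Form) : A ⊆ Th A := fun φ hφ _ hσ => hσ φ hφ

theorem th_mono (h : A ⊆ B) : Th A ⊆ Th B :=
  fun _ hφ σ hσ => hφ σ fun ψ hψ => hσ ψ (h hψ)

theorem th_th (A : Set Form) : Th (Th A) = Th A :=
  Subset.antisymm (fun _ hφ σ hσ => hφ σ fun _ hψ => hψ σ hσ) (subset_th _)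

theorem th_eq_univ_iff_not_consistent : Th A = univ ↔ ¬Consistent A := by
  constructor
  · rintro hA ⟨σ, hσ⟩
    have hfls : Form.fls ∈ Th A := hA ▸ mem_univ _
    simpa [Form.fls, Form.eval] using hfls σ hσ
  · intro hA
    exact eq_univ_of_forall fun _ σ hσ => (hA ⟨σ, hσ⟩).elim

end Semantics

section DefaultTheory

variable {W : Set Form} {D : Set Default} {E S : Set Form}

theorem gamma_subset_of_gammaClosed (h : GammaClosed W D E S) : Gamma W D E ⊆ S :=
  sInter_subset_of_mem h

theorem gammaClosed_gamma : GammaClosed W D E (Gamma W D E) := by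
  refine ⟨fun φ hφ S hS => hS.1 hφ, ?_, ?_⟩
  · refine Subset.antisymm (fun φ hφ S hS => ?_) (subset_th _)
    exact hS.2.1 ▸ th_mono (gamma_subset_of_gammaClosed hS) hφ
  · exact fun d hd hpre hjust S hS => hS.2.2 d hd (hpre S hS) hjust

theorem Stable.th_eq (h : Stable W D E) : Th E = E :=
  h ▸ gammaClosed_gamma.2.1

theorem gamma_univ_subset_th : Gamma W D univ ⊆ Th W :=
  gamma_subset_of_gammaClosed ⟨subset_th W, th_th W, fun _ _ _ hjust => (hjust (mem_univ _)).elim⟩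

theorem stable_univ_iff : Stable W D univ ↔ ¬Consistent W := by
  rw [← th_eq_univ_iff_not_consistent]
  constructor
  · intro h
    exact eq_univ_of_univ_subset (h ▸ gamma_univ_subset_th)
  · intro hW
    refine eq_univ_of_univ_subset fun φ _ S hS => ?_
    exact hS.2.1 ▸ th_mono hS.1 (hW ▸ mem_univ φ)

end DefaultTheory

theorem stmt2_general (W : Set Form) (D : Set Default)
    (hW : Consistent W) :
    ∀ E : Set Form, Stable W D E → Consistent E := by
  intro E hE
  by_contra hE'
  have hE_univ : E = univ := hE.th_eq ▸ th_eq_univ_iff_not_consistent.2 hE'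
  subst hE_univ
  exact stable_univ_iff.1 hE hW

/-- If W is consistent, then every stable extension of ⟨W,D⟩ is consistent. -/
theorem stmt2 (W : Set Form) (D : Set Default) (hD : D.Finite)
    (hW : Consistent W) :
    ∀ E : Set Form, Stable W D E → Consistent E :=
  stmt2_general W D hW
end

section
/- Let φ be a propositional formula over variables x₁,…,x_{i−1}, z₁,…,z_m, and let ψ be obtained from φ (assumed in CNF) by replacing every negative literal ¬x_j by a fresh variable x'_j and every ¬z_j by a fresh variable z'_j, and conjoining the clauses (x_j ∨ x'_j) for j < i and (z_j ∨ z'_j) for j ≤ m. Then for all truth values c₁,…,c_{i−1}: φ[x₁/c₁,…,x_{i−1}/c_{i−1}] is unsatisfiable if and only if every model σ of ψ[x₁/c₁,…,x_{i−1}/c_{i−1}, x'₁/¬c₁,…,x'_{i−1}/¬c_{i−1}] satisfies z_j ∧ z'_j for some 1 ≤ j ≤ m. -/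
def bigConj (l : List Form) : Form := l.foldr Form.conj Form.tru
def bigDisj (l : List Form) : Form := l.foldr Form.disj Form.fls

-- Variables: x_j is 4j, its primed copy x'_j is 4j+1, z_j is 4j+2, z'_j is 4j+3.

/-- Literal of the original CNF formula φ: over x- and z-variables. -/
def litPhi (k : ℕ) (l : Bool × (Fin k ⊕ ℕ)) : Form :=
  match l.2 with
  | Sum.inl j => if l.1 then Form.var (4 * j) else Form.neg (Form.var (4 * j))
  | Sum.inr j => if l.1 then Form.var (4 * j + 2) else Form.neg (Form.var (4 * j + 2))

/-- Literal of ψ: negative literals are replaced by fresh primed variables. -/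
def litPsi (k : ℕ) (l : Bool × (Fin k ⊕ ℕ)) : Form :=
  match l.2 with
  | Sum.inl j => if l.1 then Form.var (4 * j) else Form.var (4 * j + 1)
  | Sum.inr j => if l.1 then Form.var (4 * j + 2) else Form.var (4 * j + 3)

/-- φ in CNF over x_1,…,x_{k}, z_1,…,z_m (clauses as lists of literals). -/
def phiCNF (k m : ℕ) (C : List (List (Bool × (Fin k ⊕ Fin m)))) : Form :=
  bigConj (C.map fun c => bigDisj (c.map fun l => litPhi k (l.1, l.2.map id Fin.val)))

/-- ψ: φ with negative literals replaced by primed variables, conjoined with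
(x_j ∨ x'_j) and (z_j ∨ z'_j). -/
def psiForm (k m : ℕ) (C : List (List (Bool × (Fin k ⊕ Fin m)))) : Form :=
  Form.conj (bigConj (C.map fun c => bigDisj (c.map fun l => litPsi k (l.1, l.2.map id Fin.val))))
    (Form.conj
      (bigConj ((List.finRange k).map fun j =>
        Form.disj (Form.var (4 * j)) (Form.var (4 * j + 1))))
      (bigConj ((List.finRange m).map fun j =>
        Form.disj (Form.var (4 * j + 2)) (Form.var (4 * j + 3)))))

/-!
A model of ψ in which no pair `z_j, z'_j` is simultaneously true must, by the clauses
`z_j ∨ z'_j`, give every `z'_j` the value `¬ z_j`; with `x'_j = ¬ c_j` as well, every primed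
variable is the negation of its unprimed one, so ψ's clauses evaluate exactly as φ's. Conversely,
a model τ of φ[x/c] becomes such a model of ψ by setting every primed variable to the negation
of its unprimed one.
-/

namespace Form

@[simp] lemma eval_conj (σ : ℕ → Bool) (a b : Form) :
    (conj a b).eval σ = (a.eval σ && b.eval σ) := rfl

@[simp] lemma eval_disj (σ : ℕ → Bool) (a b : Form) :
    (disj a b).eval σ = (a.eval σ || b.eval σ) := rfl

@[simp] lemma eval_neg (σ : ℕ → Bool) (a : Form) : (neg a).eval σ = !(a.eval σ) := rfl

@[simp] lemma eval_var (σ : ℕ → Bool) (n : ℕ) : (var n).eval σ = σ n := rfl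

end Form

@[simp] lemma eval_bigConj (σ : ℕ → Bool) (l : List Form) :
    (bigConj l).eval σ = l.all (·.eval σ) := by
  induction l with
  | nil => rfl
  | cons a l ih => simp [bigConj, ← ih]

@[simp] lemma eval_bigDisj (σ : ℕ → Bool) (l : List Form) :
    (bigDisj l).eval σ = l.any (·.eval σ) := by
  induction l with
  | nil => rfl
  | cons a l ih => simp [bigDisj, ← ih]

def psiCNF (k m : ℕ) (C : List (List (Bool × (Fin k ⊕ Fin m)))) : Form :=
  bigConj (C.map fun c => bigDisj (c.map fun l => litPsi k (l.1, l.2.map id Fin.val)))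

lemma eval_psiForm_eq_true {k m : ℕ} (C : List (List (Bool × (Fin k ⊕ Fin m))))
    (σ : ℕ → Bool) :
    (psiForm k m C).eval σ = true ↔ (psiCNF k m C).eval σ = true ∧
      (∀ j : Fin k, σ (4 * j) = true ∨ σ (4 * j + 1) = true) ∧
      (∀ j : Fin m, σ (4 * j + 2) = true ∨ σ (4 * j + 3) = true) := by
  simp [psiForm, psiCNF]

section Literals

variable {k m : ℕ} {σ τ : ℕ → Bool}
  (hx : ∀ j : Fin k, σ (4 * j) = τ (4 * j))
  (hx' : ∀ j : Fin k, σ (4 * j + 1) = !τ (4 * j))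
  (hz : ∀ j : Fin m, σ (4 * j + 2) = τ (4 * j + 2))
  (hz' : ∀ j : Fin m, σ (4 * j + 3) = !τ (4 * j + 2))
include hx hx' hz hz'

lemma eval_litPsi_eq_eval_litPhi (l : Bool × (Fin k ⊕ Fin m)) :
    (litPsi k (l.1, l.2.map id Fin.val)).eval σ = (litPhi k (l.1, l.2.map id Fin.val)).eval τ := by
  obtain ⟨b, j | j⟩ := l <;> cases b <;> simp [litPsi, litPhi, hx, hx', hz, hz']

lemma eval_psiCNF_eq_eval_phiCNF (C : List (List (Bool × (Fin k ⊕ Fin m)))) :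
    (psiCNF k m C).eval σ = (phiCNF k m C).eval τ := by
  simp only [psiCNF, phiCNF, eval_bigConj, eval_bigDisj, List.all_map, List.any_map,
    Function.comp_def, eval_litPsi_eq_eval_litPhi hx hx' hz hz']

end Literals

/-- The primed variables are the odd ones; each gets the negation of its unprimed partner. -/
def dualRail (τ : ℕ → Bool) (n : ℕ) : Bool := if n % 2 = 0 then τ n else !τ (n - 1)

section dualRail

variable (τ : ℕ → Bool) (j : ℕ)

@[simp] lemma dualRail_four_mul : dualRail τ (4 * j) = τ (4 * j) := by
  rw [dualRail, if_pos (by omega)]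

@[simp] lemma dualRail_four_mul_add_one : dualRail τ (4 * j + 1) = !τ (4 * j) := by
  rw [dualRail, if_neg (by omega), Nat.add_sub_cancel]

@[simp] lemma dualRail_four_mul_add_two : dualRail τ (4 * j + 2) = τ (4 * j + 2) := by
  rw [dualRail, if_pos (by omega)]

@[simp] lemma dualRail_four_mul_add_three : dualRail τ (4 * j + 3) = !τ (4 * j + 2) := by
  rw [dualRail, if_neg (by omega), show 4 * j + 3 - 1 = 4 * j + 2 by omega]

end dualRail

/-- φ[x/c] is unsatisfiable iff every model of ψ[x/c, x'/¬c] satisfies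
z_j ∧ z'_j for some j. -/
theorem stmt16 (k m : ℕ) (C : List (List (Bool × (Fin k ⊕ Fin m))))
    (c : Fin k → Bool) :
    (¬ ∃ σ : ℕ → Bool, (∀ j : Fin k, σ (4 * j) = c j) ∧
        (phiCNF k m C).eval σ = true) ↔
    (∀ σ : ℕ → Bool,
      (∀ j : Fin k, σ (4 * j) = c j ∧ σ (4 * j + 1) = !(c j)) →
      (psiForm k m C).eval σ = true →
      ∃ j : Fin m, σ (4 * j + 2) = true ∧ σ (4 * j + 3) = true) := by
  constructor
  · intro hunsat σ hx hψ
    by_contra! hz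
    obtain ⟨hclauses, -, hzcover⟩ := (eval_psiForm_eq_true C σ).1 hψ
    have hz' (j : Fin m) : σ (4 * j + 3) = !σ (4 * j + 2) := by
      have hcover := hzcover j
      have hnot_both := hz j
      revert hcover hnot_both
      cases σ (4 * j + 2) <;> cases σ (4 * j + 3) <;> simp
    refine hunsat ⟨σ, fun j => (hx j).1, ?_⟩
    rwa [← eval_psiCNF_eq_eval_phiCNF (σ := σ) (fun _ => rfl)
      (fun j => by rw [(hx j).2, (hx j).1]) (fun _ => rfl) hz']
  · rintro h ⟨τ, hτ, hφ⟩
    have hψ : (psiForm k m C).eval (dualRail τ) = true := by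
      refine (eval_psiForm_eq_true C _).2 ⟨?_, fun j => ?_, fun j => ?_⟩
      · rwa [eval_psiCNF_eq_eval_phiCNF (τ := τ) (by simp) (by simp) (by simp) (by simp)]
      · cases τ (4 * j) <;> simp
      · cases τ (4 * j + 2) <;> simp
    obtain ⟨j, hz, hz'⟩ := h (dualRail τ) (fun j => by simp [hτ]) hψ
    simp_all
end
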